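/- arXiv:2406.04911 — 5 statements merged into one kernel-verified Lean document; each statement's English description precedes it below -/
import Mathlib

section
/- Let $Z_k$ be independent exponential random variables with rate $k$, and let $\widetilde{C}_n = \sum_{k=1}^n (Z_k - 1/k)$. Then the moment generating function of $\widetilde{C}_n$ at any $t < 1$ equals $\prod_{k=1}^n \frac{1}{1-t/k} e^{-t/k}$, and converges as $n \to \infty$ to $\Gamma(1-t) e^{-\gamma t}$, the moment generating function of a Gumbel distribution with location parameter $-\gamma$ and scale $1$. -/
/-!
Since `Z k - 1/k` are independent, the MGF of `C̃_n` factors, and an exponential variable of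
rate `k` has MGF `(1 - t/k)⁻¹`. The finite product `∏ (1 - t/k)⁻¹` equals `n! / ∏_{j<n} (1 - t + j)`,
i.e. Euler's sequence `GammaSeq (1 - t) n` up to the factor `(1 - t + n)/n · n^t`, while
`∏ e^{-t/k} = e^{-t H_n}`. Hence the MGF is `GammaSeq (1 - t) n · (1 - t + n)/n · e^{-t (H_n - log n)}`,
which tends to `Γ(1 - t) e^{-γ t}` by Euler's limit formula and `H_n - log n → γ`.
-/

open MeasureTheory ProbabilityTheory Finset Filter Topology

open scoped Nat

lemma mgf_id_expMeasure {r t : ℝ} (hr : 0 < r) (ht : t < r) :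
    mgf id (expMeasure r) t = (1 - t / r)⁻¹ := by
  have hdensity : (fun x => (exponentialPDFReal r x).toNNReal • Real.exp (t * x))
      = Set.indicator (Set.Ici 0) (fun x => r * Real.exp ((t - r) * x)) := by
    ext x
    by_cases hx : 0 ≤ x
    · rw [Set.indicator_of_mem (Set.mem_Ici.2 hx), NNReal.smul_def,
        Real.coe_toNNReal _ (exponentialPDFReal_nonneg hr x)]
      simp only [exponentialPDFReal, gammaPDFReal, hx, if_true, Real.rpow_one, Real.Gamma_one,
        div_one, sub_self, Real.rpow_zero, mul_one, smul_eq_mul, mul_assoc, ← Real.exp_add]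
      ring_nf
    · simp [hx, exponentialPDFReal, gammaPDFReal]
  change ∫ x, Real.exp (t * x) ∂volume.withDensity (fun x => (exponentialPDFReal r x).toNNReal) = _
  rw [integral_withDensity_eq_integral_smul (measurable_exponentialPDFReal r).real_toNNReal,
    hdensity, integral_indicator measurableSet_Ici, integral_Ici_eq_integral_Ioi,
    integral_const_mul, integral_exp_mul_Ioi (by linarith), mul_zero, Real.exp_zero,
    one_sub_div hr.ne', inv_div, neg_div, ← div_neg, neg_sub, mul_one_div]

lemma mgf_eq_of_map_eq_expMeasure {Ω : Type*} [MeasurableSpace Ω] {μ : Measure Ω} {X : Ω → ℝ}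
    {r t : ℝ} (hX : AEMeasurable X μ) (hmap : μ.map X = expMeasure r) (hr : 0 < r) (ht : t < r) :
    mgf X μ t = (1 - t / r)⁻¹ := by
  rw [← mgf_id_map hX, hmap, mgf_id_expMeasure hr ht]

lemma prod_Icc_one_sub_div_inv {t : ℝ} (ht : t < 1) (n : ℕ) :
    ∏ k ∈ Icc 1 n, (1 - t / k)⁻¹ = n ! / ∏ j ∈ range n, (1 - t + j) := by
  induction n with
  | zero => simp
  | succ n ih =>
    have hn : 1 - t + (n : ℝ) ≠ 0 := by linarith [(n.cast_nonneg : (0 : ℝ) ≤ n)]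
    have hpos : ∏ j ∈ range n, (1 - t + (j : ℝ)) ≠ 0 :=
      prod_ne_zero_iff.2 fun j _ => by linarith [(j.cast_nonneg : (0 : ℝ) ≤ j)]
    rw [prod_Icc_succ_top (by omega), ih, prod_range_succ, Nat.factorial_succ]
    have hstep : (1 - t / ((n : ℝ) + 1))⁻¹ = (n + 1) / (1 - t + n) := by
      rw [one_sub_div n.cast_add_one_ne_zero, inv_div]
      ring_nf
    push_cast
    rw [hstep]
    field_simp

lemma prod_Icc_one_sub_div_inv_eq_GammaSeq {t : ℝ} (ht : t < 1) {n : ℕ} (hn : n ≠ 0) :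
    ∏ k ∈ Icc 1 n, (1 - t / k)⁻¹ = Real.GammaSeq (1 - t) n * ((1 - t + n) / n) * n ^ t := by
  have hn' : (0 : ℝ) < n := by positivity
  have hpos : ∏ j ∈ range n, (1 - t + (j : ℝ)) ≠ 0 :=
    prod_ne_zero_iff.2 fun j _ => by linarith [(j.cast_nonneg : (0 : ℝ) ≤ j)]
  have hlast : 1 - t + (n : ℝ) ≠ 0 := by linarith
  have hrpow : (n : ℝ) ^ (1 - t) * n ^ t = n := by
    rw [← Real.rpow_add hn', sub_add_cancel, Real.rpow_one]
  rw [prod_Icc_one_sub_div_inv ht, Real.GammaSeq, prod_range_succ]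
  field_simp
  exact hrpow.symm

lemma prod_Icc_exp_neg_div (t : ℝ) (n : ℕ) :
    ∏ k ∈ Icc 1 n, Real.exp (-t / k) = Real.exp (-t * harmonic n) := by
  rw [← Real.exp_sum, harmonic_eq_sum_Icc]
  push_cast
  rw [mul_sum]
  rfl

lemma tendsto_prod_one_sub_div_inv_mul_exp {t : ℝ} (ht : t < 1) :
    Tendsto (fun n : ℕ => ∏ k ∈ Icc 1 n, (1 - t / k)⁻¹ * Real.exp (-t / k)) atTop
      (𝓝 (Real.Gamma (1 - t) * Real.exp (-Real.eulerMascheroniConstant * t))) := by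
  have hratio : Tendsto (fun n : ℕ => (1 - t + n) / (n : ℝ)) atTop (𝓝 1) := by
    simpa [add_comm, inv_div] using (tendsto_natCast_div_add_atTop (1 - t)).inv₀ one_ne_zero
  have hharmonic : Tendsto (fun n : ℕ => Real.exp (-t * (harmonic n - Real.log n))) atTop
      (𝓝 (Real.exp (-Real.eulerMascheroniConstant * t))) := by
    rw [neg_mul_comm, mul_comm]
    exact (Real.continuous_exp.tendsto _).comp (Real.tendsto_harmonic_sub_log.const_mul (-t))
  have hlim := ((Real.GammaSeq_tendsto_Gamma (1 - t)).mul hratio).mul hharmonic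
  rw [mul_one] at hlim
  refine hlim.congr' ?_
  filter_upwards [eventually_ne_atTop 0] with n hn
  have hexp : (n : ℝ) ^ t * Real.exp (-t * harmonic n) =
      Real.exp (-t * (harmonic n - Real.log n)) := by
    rw [Real.rpow_def_of_pos (by positivity), ← Real.exp_add]
    ring_nf
  rw [prod_mul_distrib, prod_Icc_one_sub_div_inv_eq_GammaSeq ht hn, prod_Icc_exp_neg_div, ← hexp]
  ring

theorem stmt3_general
    {Ω : Type*} [MeasurableSpace Ω] (μ : Measure Ω)
    (Z : ℕ → Ω → ℝ)
    (hmeas : ∀ k, Measurable (Z k))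
    (hindep : iIndepFun Z μ)
    (hdist : ∀ k ≥ 1, μ.map (Z k) = expMeasure k)
    (Ctil : ℕ → Ω → ℝ) (hC : ∀ n ω, Ctil n ω = ∑ k ∈ Icc 1 n, (Z k ω - 1 / k))
    (t : ℝ) (ht : t < 1) :
    (∀ n : ℕ, mgf (Ctil n) μ t = ∏ k ∈ Icc 1 n, (1 - t / k)⁻¹ * Real.exp (-t / k)) ∧
    Tendsto (fun n : ℕ => mgf (Ctil n) μ t) atTop
      (𝓝 (Real.Gamma (1 - t) *
        Real.exp (-Real.eulerMascheroniConstant * t))) := by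
  have hfactor : ∀ k ≥ 1,
      mgf (fun ω => Z k ω - 1 / k) μ t = (1 - t / k)⁻¹ * Real.exp (-t / k) := by
    intro k hk
    have hk' : (1 : ℝ) ≤ k := by exact_mod_cast hk
    simp_rw [sub_eq_add_neg]
    rw [mgf_add_const, mgf_eq_of_map_eq_expMeasure (hmeas k).aemeasurable (hdist k hk)
      (by linarith) (by linarith)]
    ring_nf
  have hmgf : ∀ n : ℕ, mgf (Ctil n) μ t = ∏ k ∈ Icc 1 n, (1 - t / k)⁻¹ * Real.exp (-t / k) := by
    intro n
    have hCtil : Ctil n = ∑ k ∈ Icc 1 n, fun ω => Z k ω - 1 / k := by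
      ext ω
      simp [hC, Finset.sum_apply]
    have hcentred : iIndepFun (fun k ω => Z k ω - 1 / k) μ :=
      hindep.comp _ fun k => measurable_id.sub_const (1 / k : ℝ)
    rw [hCtil, hcentred.mgf_sum fun k => (hmeas k).sub_const _]
    exact prod_congr rfl fun k hk => hfactor k (mem_Icc.1 hk).1
  exact ⟨hmgf, by simpa only [hmgf] using tendsto_prod_one_sub_div_inv_mul_exp ht⟩

/-- The MGF of `C̃_n = ∑_{k=1}^n (Z k - 1/k)` at `t < 1` equals
`∏_{k=1}^n (1-t/k)⁻¹ e^{-t/k}`, which converges to `Γ(1-t) e^{-γ t}`, the MGF of a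
Gumbel distribution with location `-γ` and scale `1`. -/
theorem stmt3
    {Ω : Type*} [MeasurableSpace Ω] (μ : Measure Ω) [IsProbabilityMeasure μ]
    (Z : ℕ → Ω → ℝ)
    (hmeas : ∀ k, Measurable (Z k))
    (hindep : iIndepFun Z μ)
    (hdist : ∀ k ≥ 1, μ.map (Z k) = expMeasure k)
    (Ctil : ℕ → Ω → ℝ) (hC : ∀ n ω, Ctil n ω = ∑ k ∈ Icc 1 n, (Z k ω - 1 / k))
    (t : ℝ) (ht : t < 1) :
    (∀ n : ℕ, mgf (Ctil n) μ t = ∏ k ∈ Icc 1 n, (1 - t / k)⁻¹ * Real.exp (-t / k)) ∧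
    Tendsto (fun n : ℕ => mgf (Ctil n) μ t) atTop
      (𝓝 (Real.Gamma (1 - t) *
        Real.exp (-Real.eulerMascheroniConstant * t))) :=
  stmt3_general μ Z hmeas hindep hdist Ctil hC t ht
end

section
/- If $X_1, \ldots, X_n$ are independent with $X_i$ exponentially distributed with rate $(n-i+1)^2$, and $Y_k = \sum_{i=1}^k X_i$, then for $0 \leq \alpha < 1$, $\mathbb{E}[Y_{\lceil \alpha n \rceil}] = \sum_{i=1}^{\lceil \alpha n \rceil} (n-i+1)^{-2}$ and $n\,\mathbb{E}[Y_{\lceil \alpha n \rceil}] \to \alpha/(1-\alpha)$ as $n \to \infty$, while $n^2\,\mathrm{Var}(Y_{\lceil \alpha n \rceil}) \to 0$; consequently $n\,Y_{\lceil \alpha n \rceil}$ converges in probability to $\alpha/(1-\alpha)$. -/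
open MeasureTheory ProbabilityTheory Finset Filter Topology

/-!
The mean and variance of `Y n k` are `∑ (n-i+1)⁻²` and `∑ (n-i+1)⁻⁴` over `i ≤ k`; with
`j = n - i + 1` and `k = ⌈αn⌉` these are tails `∑_{m < j ≤ n}` with `m = n - k ~ (1-α) n`.
Telescoping, `1/(m+1) - 1/(n+1) ≤ ∑_{m < j ≤ n} j⁻² ≤ 1/m - 1/n`, so `n E[Y] → 1/(1-α) - 1`,
while `∑_{m < j ≤ n} j⁻⁴ ≤ n/(m+1)⁴ = O(n⁻³)` makes `n² Var(Y) → 0`. Chebyshev's inequality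
turns these two limits into convergence in probability.
-/

namespace ProbabilityTheory

lemma tendsto_measure_abs_sub_ge_of_tendsto_variance {Ω ι : Type*} [MeasurableSpace Ω]
    {μ : Measure Ω} [IsFiniteMeasure μ] {l : Filter ι} {Z : ι → Ω → ℝ} {c ε : ℝ}
    (hZ : ∀ i, MemLp (Z i) 2 μ) (hmean : Tendsto (fun i => μ[Z i]) l (𝓝 c))
    (hvar : Tendsto (fun i => Var[Z i; μ]) l (𝓝 0)) (hε : 0 < ε) :
    Tendsto (fun i => μ {ω | ε ≤ |Z i ω - c|}) l (𝓝 0) := by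
  have hε2 : 0 < ε / 2 := half_pos hε
  have hbound : Tendsto (fun i => ENNReal.ofReal (Var[Z i; μ] / (ε / 2) ^ 2)) l (𝓝 0) := by
    simpa using ENNReal.tendsto_ofReal (hvar.div_const ((ε / 2) ^ 2))
  refine tendsto_of_tendsto_of_tendsto_of_le_of_le' tendsto_const_nhds hbound
    (Eventually.of_forall fun _ => zero_le) ?_
  filter_upwards [hmean.eventually (eventually_abs_sub_lt c hε2)] with i hi
  refine (measure_mono fun ω hω => ?_).trans (meas_ge_le_variance_div_sq (hZ i) hε2)
  have := abs_sub_le (Z i ω) μ[Z i] c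
  simp only [Set.mem_ofPred_eq] at hω ⊢
  linarith

open Real

lemma expMeasure_eq_withDensity_Ioi (r : ℝ) :
    expMeasure r = (volume.restrict (Set.Ioi 0)).withDensity
      fun x => ENNReal.ofReal (r * exp (-(r * x))) := by
  rw [Measure.restrict_congr_set Ioi_ae_eq_Ici, ← withDensity_indicator measurableSet_Ici]
  change volume.withDensity (exponentialPDF r) = _
  congr 1
  ext x
  by_cases hx : 0 ≤ x <;> simp [exponentialPDF_eq, hx]

variable {r : ℝ}

lemma integral_expMeasure (hr : 0 < r) (g : ℝ → ℝ) :
    ∫ x, g x ∂expMeasure r = ∫ x in Set.Ioi 0, r * exp (-(r * x)) * g x := by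
  rw [expMeasure_eq_withDensity_Ioi, integral_withDensity_eq_integral_toReal_smul (by fun_prop)
    (by simp)]
  simp_rw [ENNReal.toReal_ofReal (by positivity : 0 ≤ r * exp _), smul_eq_mul]

lemma integrable_expMeasure_iff (hr : 0 < r) (g : ℝ → ℝ) :
    Integrable g (expMeasure r) ↔
      IntegrableOn (fun x => r * exp (-(r * x)) * g x) (Set.Ioi 0) := by
  rw [expMeasure_eq_withDensity_Ioi, integrable_withDensity_iff (by fun_prop) (by simp)]
  simp_rw [ENNReal.toReal_ofReal (by positivity : 0 ≤ r * exp _), mul_comm (g _)]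
  rfl

lemma setIntegral_Ioi_mul_exp_mul_pow (hr : 0 < r) (p : ℕ) :
    ∫ x in Set.Ioi 0, r * exp (-(r * x)) * x ^ p = p.factorial / r ^ p := by
  have hΓ := integral_rpow_mul_exp_neg_mul_Ioi (a := p + 1) (by positivity) hr
  rw [add_sub_cancel_right, Real.Gamma_nat_eq_factorial, ← Nat.cast_add_one, rpow_natCast] at hΓ
  simp_rw [rpow_natCast] at hΓ
  simp_rw [mul_assoc, integral_const_mul, mul_comm (exp _), hΓ, div_pow, one_pow, pow_succ]
  field_simp

lemma integrable_pow_expMeasure (hr : 0 < r) (p : ℕ) :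
    Integrable (fun x => x ^ p) (expMeasure r) :=
  (integrable_expMeasure_iff hr _).2 <| Integrable.of_integral_ne_zero <| by
    rw [setIntegral_Ioi_mul_exp_mul_pow hr]
    positivity

lemma integral_pow_expMeasure (hr : 0 < r) (p : ℕ) :
    ∫ x, x ^ p ∂expMeasure r = p.factorial / r ^ p := by
  rw [integral_expMeasure hr, setIntegral_Ioi_mul_exp_mul_pow hr]

lemma memLp_id_expMeasure (hr : 0 < r) : MemLp id 2 (expMeasure r) :=
  (memLp_two_iff_integrable_sq aestronglyMeasurable_id).2 (integrable_pow_expMeasure hr 2)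

lemma integral_id_expMeasure (hr : 0 < r) : ∫ x, x ∂expMeasure r = r⁻¹ := by
  simpa using integral_pow_expMeasure hr 1

lemma variance_id_expMeasure (hr : 0 < r) : Var[id; expMeasure r] = (r ^ 2)⁻¹ := by
  have := isProbabilityMeasure_expMeasure hr
  rw [variance_eq_sub (memLp_id_expMeasure hr)]
  simp only [Pi.pow_apply, id_eq]
  rw [integral_pow_expMeasure hr, integral_id_expMeasure hr]
  ring

variable {Ω : Type*} [MeasurableSpace Ω] {μ : Measure Ω} {X : Ω → ℝ}

lemma hasLaw_of_map_eq_expMeasure (hr : 0 < r) (h : μ.map X = expMeasure r) :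
    HasLaw X (expMeasure r) μ :=
  have := isProbabilityMeasure_expMeasure hr
  ⟨.of_map_ne_zero (h ▸ IsProbabilityMeasure.ne_zero _), h⟩

lemma HasLaw.memLp_two_of_expMeasure (hX : HasLaw X (expMeasure r) μ) (hr : 0 < r) :
    MemLp X 2 μ :=
  (memLp_map_measure_iff aestronglyMeasurable_id hX.aemeasurable).1
    (hX.map_eq ▸ memLp_id_expMeasure hr)

lemma HasLaw.integral_eq_of_expMeasure (hX : HasLaw X (expMeasure r) μ) (hr : 0 < r) :
    μ[X] = r⁻¹ :=
  hX.integral_eq.trans (integral_id_expMeasure hr)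

lemma HasLaw.variance_eq_of_expMeasure (hX : HasLaw X (expMeasure r) μ) (hr : 0 < r) :
    Var[X; μ] = (r ^ 2)⁻¹ :=
  hX.variance_eq.trans (variance_id_expMeasure hr)

section SumOfExponentials

variable {ι : Type*} {X : ι → Ω → ℝ} {r : ι → ℝ} {s : Finset ι}

lemma memLp_sum_of_hasLaw_expMeasure (hX : ∀ i ∈ s, HasLaw (X i) (expMeasure (r i)) μ)
    (hr : ∀ i ∈ s, 0 < r i) : MemLp (fun ω => ∑ i ∈ s, X i ω) 2 μ :=
  memLp_finsetSum s fun i hi => (hX i hi).memLp_two_of_expMeasure (hr i hi)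

lemma integral_sum_of_hasLaw_expMeasure [IsFiniteMeasure μ]
    (hX : ∀ i ∈ s, HasLaw (X i) (expMeasure (r i)) μ) (hr : ∀ i ∈ s, 0 < r i) :
    μ[fun ω => ∑ i ∈ s, X i ω] = ∑ i ∈ s, (r i)⁻¹ := by
  rw [integral_finsetSum s fun i hi =>
    ((hX i hi).memLp_two_of_expMeasure (hr i hi)).integrable one_le_two]
  exact sum_congr rfl fun i hi => (hX i hi).integral_eq_of_expMeasure (hr i hi)

lemma variance_sum_of_hasLaw_expMeasure (hind : iIndepFun X μ)
    (hX : ∀ i ∈ s, HasLaw (X i) (expMeasure (r i)) μ) (hr : ∀ i ∈ s, 0 < r i) :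
    Var[fun ω => ∑ i ∈ s, X i ω; μ] = ∑ i ∈ s, (r i ^ 2)⁻¹ := by
  rw [← Finset.sum_fn, IndepFun.variance_sum
    (fun i hi => (hX i hi).memLp_two_of_expMeasure (hr i hi)) fun i _ j _ hij => hind.indepFun hij]
  exact sum_congr rfl fun i hi => (hX i hi).variance_eq_of_expMeasure (hr i hi)

end SumOfExponentials
end ProbabilityTheory

lemma sum_Icc_one_comp_sub_add_one {M : Type*} [AddCommMonoid M] (f : ℕ → M) {k n : ℕ}
    (hk : k ≤ n) : ∑ i ∈ Icc 1 k, f (n - i + 1) = ∑ j ∈ Ioc (n - k) n, f j := by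
  refine sum_nbij' (fun i => n - i + 1) (fun j => n - j + 1) ?_ ?_ ?_ ?_ fun _ _ => rfl <;>
    intro i hi <;> simp only [mem_Icc, mem_Ioc] at hi ⊢ <;> omega

lemma sum_Ioc_inv_sq_le {m n : ℕ} (hm : 0 < m) (h : m ≤ n) :
    ∑ j ∈ Ioc m n, ((j : ℝ) ^ 2)⁻¹ ≤ (m : ℝ)⁻¹ - (n : ℝ)⁻¹ := by
  induction n, h using Nat.le_induction with
  | base => simp
  | succ n hmn ih =>
    have hn : (0 : ℝ) < n := by exact_mod_cast hm.trans_le hmn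
    have step : (((n : ℝ) + 1) ^ 2)⁻¹ ≤ (n : ℝ)⁻¹ - ((n : ℝ) + 1)⁻¹ := by
      rw [inv_sub_inv hn.ne' (by positivity), inv_eq_one_div,
        div_le_div_iff₀ (by positivity) (by positivity)]
      nlinarith
    rw [sum_Ioc_succ_top (by omega)]
    push_cast
    linarith

lemma inv_add_one_sub_le_sum_Ioc_inv_sq {m n : ℕ} (h : m ≤ n) :
    ((m : ℝ) + 1)⁻¹ - ((n : ℝ) + 1)⁻¹ ≤ ∑ j ∈ Ioc m n, ((j : ℝ) ^ 2)⁻¹ := by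
  induction n, h using Nat.le_induction with
  | base => simp
  | succ n hmn ih =>
    have step : ((n : ℝ) + 1)⁻¹ - ((n : ℝ) + 1 + 1)⁻¹ ≤ (((n : ℝ) + 1) ^ 2)⁻¹ := by
      rw [inv_sub_inv (by positivity) (by positivity), inv_eq_one_div,
        div_le_div_iff₀ (by positivity) (by positivity)]
      nlinarith
    rw [sum_Ioc_succ_top (by omega)]
    push_cast
    linarith

lemma sum_Ioc_inv_pow_four_le (m n : ℕ) :
    ∑ j ∈ Ioc m n, ((j : ℝ) ^ 4)⁻¹ ≤ n / ((m : ℝ) + 1) ^ 4 := by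
  calc ∑ j ∈ Ioc m n, ((j : ℝ) ^ 4)⁻¹
      ≤ #(Ioc m n) • (((m : ℝ) + 1) ^ 4)⁻¹ := by
        refine sum_le_card_nsmul _ _ _ fun j hj => ?_
        have : (m : ℝ) + 1 ≤ j := by exact_mod_cast (mem_Ioc.1 hj).1
        gcongr
    _ ≤ n / ((m : ℝ) + 1) ^ 4 := by
        rw [nsmul_eq_mul, Nat.card_Ioc, div_eq_mul_inv]
        gcongr
        exact_mod_cast n.sub_le m

lemma tendsto_div_add_of_tendsto_div {f : ℕ → ℝ} {c : ℝ} (hc : c ≠ 0) (t : ℝ)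
    (h : Tendsto (fun n => f n / n) atTop (𝓝 c)) :
    Tendsto (fun n : ℕ => n / (f n + t)) atTop (𝓝 c⁻¹) := by
  have h' : Tendsto (fun n : ℕ => (f n + t) / n) atTop (𝓝 c) := by
    simpa [add_div] using h.add (tendsto_const_div_atTop_nhds_zero_nat t)
  simpa [inv_div] using h'.inv₀ hc

section
variable {m : ℕ → ℕ} {c : ℝ}

lemma tendsto_mul_sum_Ioc_inv_sq (hc : 0 < c) (hm : ∀ n, m n ≤ n)
    (h : Tendsto (fun n => (m n : ℝ) / n) atTop (𝓝 c)) :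
    Tendsto (fun n : ℕ => n * ∑ j ∈ Ioc (m n) n, ((j : ℝ) ^ 2)⁻¹) atTop (𝓝 (c⁻¹ - 1)) := by
  have hself : Tendsto (fun n : ℕ => (n : ℝ) / n) atTop (𝓝 1) :=
    tendsto_const_nhds.congr' <| (eventually_ne_atTop 0).mono fun n hn => by simp [hn]
  have hlow : Tendsto (fun n : ℕ => n / ((m n : ℝ) + 1) - n / ((n : ℝ) + 1)) atTop
      (𝓝 (c⁻¹ - 1⁻¹)) :=
    (tendsto_div_add_of_tendsto_div hc.ne' 1 h).sub
      (tendsto_div_add_of_tendsto_div one_ne_zero 1 hself)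
  have hup : Tendsto (fun n : ℕ => n / (m n : ℝ) - 1) atTop (𝓝 (c⁻¹ - 1)) := by
    simpa using (tendsto_div_add_of_tendsto_div hc.ne' 0 h).sub_const 1
  rw [inv_one] at hlow
  refine tendsto_of_tendsto_of_tendsto_of_le_of_le' hlow hup ?_ ?_
  · refine Eventually.of_forall fun n => ?_
    have := mul_le_mul_of_nonneg_left (inv_add_one_sub_le_sum_Ioc_inv_sq (hm n)) n.cast_nonneg
    rwa [mul_sub, ← div_eq_mul_inv, ← div_eq_mul_inv] at this
  · have hpos : ∀ᶠ n in atTop, 0 < (m n : ℝ) / n := h.eventually (eventually_gt_nhds hc)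
    filter_upwards [hpos, eventually_ne_atTop 0] with n hpos hn
    have hm0 : 0 < m n := by
      by_contra h0
      simp_all
    have := mul_le_mul_of_nonneg_left (sum_Ioc_inv_sq_le hm0 (hm n)) n.cast_nonneg
    rwa [mul_sub, ← div_eq_mul_inv, mul_inv_cancel₀ (by exact_mod_cast hn)] at this

lemma tendsto_sq_mul_sum_Ioc_inv_pow_four (hc : 0 < c)
    (h : Tendsto (fun n => (m n : ℝ) / n) atTop (𝓝 c)) :
    Tendsto (fun n : ℕ => (n : ℝ) ^ 2 * ∑ j ∈ Ioc (m n) n, ((j : ℝ) ^ 4)⁻¹) atTop (𝓝 0) := by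
  have hup : Tendsto (fun n : ℕ => (n / ((m n : ℝ) + 1)) ^ 4 * (n : ℝ)⁻¹) atTop (𝓝 0) := by
    simpa using ((tendsto_div_add_of_tendsto_div hc.ne' 1 h).pow 4).mul
      tendsto_inv_atTop_nhds_zero_nat
  refine tendsto_of_tendsto_of_tendsto_of_le_of_le tendsto_const_nhds hup
    (fun n => by positivity) fun n => ?_
  calc (n : ℝ) ^ 2 * ∑ j ∈ Ioc (m n) n, ((j : ℝ) ^ 4)⁻¹
      ≤ (n : ℝ) ^ 2 * (n / ((m n : ℝ) + 1) ^ 4) := by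
        gcongr
        exact sum_Ioc_inv_pow_four_le _ _
    _ = _ := by
        rcases eq_or_ne n 0 with rfl | hn
        · simp
        · field_simp
end

lemma Nat.ceil_mul_le_self {α : ℝ} (hα : α ≤ 1) (n : ℕ) : ⌈α * n⌉₊ ≤ n :=
  Nat.ceil_le.2 (mul_le_of_le_one_left n.cast_nonneg hα)

lemma tendsto_sub_ceil_mul_div {α : ℝ} (hα0 : 0 ≤ α) (hα1 : α ≤ 1) :
    Tendsto (fun n : ℕ => ((n - ⌈α * n⌉₊ : ℕ) : ℝ) / n) atTop (𝓝 (1 - α)) := by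
  have hceil : Tendsto (fun n : ℕ => (⌈α * n⌉₊ : ℝ) / n) atTop (𝓝 α) :=
    (tendsto_nat_ceil_mul_div_atTop hα0).comp tendsto_natCast_atTop_atTop
  refine (tendsto_const_nhds.sub hceil).congr' <|
    (eventually_ne_atTop 0).mono fun n hn => ?_
  dsimp only
  rw [Nat.cast_sub (Nat.ceil_mul_le_self hα1 n), sub_div, div_self (by exact_mod_cast hn)]

theorem stmt6_general
    {Ω : Type*} [MeasurableSpace Ω] (μ : Measure Ω) [IsProbabilityMeasure μ]
    (X : ℕ → ℕ → Ω → ℝ)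
    (hindep : ∀ n, iIndepFun (X n) μ)
    (hdist : ∀ n, ∀ i ∈ Icc 1 n, μ.map (X n i) = expMeasure (((n - i + 1 : ℕ) : ℝ) ^ 2))
    (Y : ℕ → ℕ → Ω → ℝ) (hY : ∀ n k ω, Y n k ω = ∑ i ∈ Icc 1 k, X n i ω)
    (α : ℝ) (hα0 : 0 ≤ α) (hα1 : α < 1) :
    (∀ n : ℕ, μ[Y n ⌈α * n⌉₊] = ∑ i ∈ Icc 1 ⌈α * n⌉₊, (((n - i + 1 : ℕ) : ℝ) ^ 2)⁻¹) ∧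
    Tendsto (fun n : ℕ => (n : ℝ) * μ[Y n ⌈α * n⌉₊]) atTop (𝓝 (α / (1 - α))) ∧
    Tendsto (fun n : ℕ => (n : ℝ) ^ 2 * variance (Y n ⌈α * n⌉₊) μ) atTop (𝓝 0) ∧
    (∀ ε > 0, Tendsto
      (fun n : ℕ => μ {ω | ε ≤ |(n : ℝ) * Y n ⌈α * n⌉₊ ω - α / (1 - α)|})
      atTop (𝓝 0)) := by
  have hk := Nat.ceil_mul_le_self hα1.le
  have hrate (n : ℕ) : ∀ i ∈ Icc 1 ⌈α * n⌉₊, (0 : ℝ) < ((n - i + 1 : ℕ) : ℝ) ^ 2 :=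
    fun _ _ => by positivity
  have hlaw (n : ℕ) : ∀ i ∈ Icc 1 ⌈α * n⌉₊,
      HasLaw (X n i) (expMeasure (((n - i + 1 : ℕ) : ℝ) ^ 2)) μ := fun i hi =>
    hasLaw_of_map_eq_expMeasure (hrate n i hi) (hdist n i (Icc_subset_Icc_right (hk n) hi))
  have hYsum (n k : ℕ) : Y n k = fun ω => ∑ i ∈ Icc 1 k, X n i ω := funext (hY n k)
  have hmean (n : ℕ) : μ[Y n ⌈α * n⌉₊] = ∑ i ∈ Icc 1 ⌈α * n⌉₊, (((n - i + 1 : ℕ) : ℝ) ^ 2)⁻¹ := by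
    rw [hYsum]
    exact integral_sum_of_hasLaw_expMeasure (hlaw n) (hrate n)
  have hvar (n : ℕ) : Var[Y n ⌈α * n⌉₊; μ] = ∑ j ∈ Ioc (n - ⌈α * n⌉₊) n, ((j : ℝ) ^ 4)⁻¹ := by
    rw [hYsum, variance_sum_of_hasLaw_expMeasure (hindep n) (hlaw n) (hrate n),
      ← sum_Icc_one_comp_sub_add_one (fun j => ((j : ℝ) ^ 4)⁻¹) (hk n)]
    simp only [← pow_mul]
  have hm := tendsto_sub_ceil_mul_div hα0 hα1.le
  have hlim_mean : Tendsto (fun n : ℕ => (n : ℝ) * μ[Y n ⌈α * n⌉₊]) atTop (𝓝 (α / (1 - α))) := by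
    have h := tendsto_mul_sum_Ioc_inv_sq (sub_pos.2 hα1) (fun n => n.sub_le _) hm
    rw [show (1 - α)⁻¹ - 1 = α / (1 - α) by field_simp [(sub_pos.2 hα1).ne']; ring] at h
    refine h.congr fun n => ?_
    rw [hmean, sum_Icc_one_comp_sub_add_one (fun j => ((j : ℝ) ^ 2)⁻¹) (hk n)]
  have hlim_var : Tendsto (fun n : ℕ => (n : ℝ) ^ 2 * Var[Y n ⌈α * n⌉₊; μ]) atTop (𝓝 0) :=
    (tendsto_sq_mul_sum_Ioc_inv_pow_four (sub_pos.2 hα1) hm).congr fun n => by rw [hvar]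
  refine ⟨hmean, hlim_mean, hlim_var, fun ε hε => ?_⟩
  refine tendsto_measure_abs_sub_ge_of_tendsto_variance (Z := fun n ω => n * Y n ⌈α * n⌉₊ ω)
    (fun n => ?_) (hlim_mean.congr fun n => (integral_const_mul _ _).symm)
    (hlim_var.congr fun n => (variance_const_mul _ _ _).symm) hε
  rw [hYsum]
  exact (memLp_sum_of_hasLaw_expMeasure (hlaw n) (hrate n)).const_mul _

/-- For each `n`, let `X n 1, ..., X n n` be independent with `X n i` exponential of
rate `(n-i+1)²`, and `Y n k = ∑_{i=1}^k X n i`. For `0 ≤ α < 1`: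
`E[Y n ⌈αn⌉] = ∑_{i=1}^{⌈αn⌉} (n-i+1)⁻²`, `n E[Y n ⌈αn⌉] → α/(1-α)`,
`n² Var(Y n ⌈αn⌉) → 0`, and `n Y n ⌈αn⌉ → α/(1-α)` in probability. -/
theorem stmt6
    {Ω : Type*} [MeasurableSpace Ω] (μ : Measure Ω) [IsProbabilityMeasure μ]
    (X : ℕ → ℕ → Ω → ℝ)
    (hmeas : ∀ n i, Measurable (X n i))
    (hindep : ∀ n, iIndepFun (X n) μ)
    (hdist : ∀ n, ∀ i ∈ Icc 1 n, μ.map (X n i) = expMeasure (((n - i + 1 : ℕ) : ℝ) ^ 2))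
    (Y : ℕ → ℕ → Ω → ℝ) (hY : ∀ n k ω, Y n k ω = ∑ i ∈ Icc 1 k, X n i ω)
    (α : ℝ) (hα0 : 0 ≤ α) (hα1 : α < 1) :
    (∀ n : ℕ, μ[Y n ⌈α * n⌉₊] = ∑ i ∈ Icc 1 ⌈α * n⌉₊, (((n - i + 1 : ℕ) : ℝ) ^ 2)⁻¹) ∧
    Tendsto (fun n : ℕ => (n : ℝ) * μ[Y n ⌈α * n⌉₊]) atTop (𝓝 (α / (1 - α))) ∧
    Tendsto (fun n : ℕ => (n : ℝ) ^ 2 * variance (Y n ⌈α * n⌉₊) μ) atTop (𝓝 0) ∧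
    (∀ ε > 0, Tendsto
      (fun n : ℕ => μ {ω | ε ≤ |(n : ℝ) * Y n ⌈α * n⌉₊ ω - α / (1 - α)|})
      atTop (𝓝 0)) :=
  stmt6_general μ X hindep hdist Y hY α hα0 hα1
end

section
/- Let $T_r$ be the sum of $r$ independent exponential random variables of rate $1$ (i.e., Gamma$(r,1)$-distributed), and define $p_r = \mathbb{E}[1/(1+T_r)]$. Then $r\,p_r \to 1$ as $r \to \infty$. -/
/-!
For `x > 0` we have `1/x - 1/x² ≤ 1/(1+x) ≤ 1/x`. Against the Gamma(a,1) density these bounds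
integrate to the negative moments `E[T⁻¹] = Γ(a-1)/Γ(a) = 1/(a-1)` and
`E[T⁻²] = Γ(a-2)/Γ(a) = 1/((a-1)(a-2))`, so `E[1/(1+T)] = 1/a + O(1/a²)`; explicitly
`|a E[1/(1+T)] - 1| ≤ 3/a` for `a ≥ 3`.
-/

open MeasureTheory ProbabilityTheory Set Filter Topology

lemma integral_gammaMeasure_eq_setIntegral {a r : ℝ} (ha : 0 < a) (hr : 0 < r) (f : ℝ → ℝ) :
    ∫ x, f x ∂gammaMeasure a r = ∫ x in Ioi 0, gammaPDFReal a r x * f x := by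
  have hpdf (x : ℝ) : (gammaPDF a r x).toReal = gammaPDFReal a r x :=
    ENNReal.toReal_ofReal (gammaPDFReal_nonneg ha hr x)
  have hmeas : Measurable (gammaPDF a r) := (measurable_gammaPDFReal a r).ennreal_ofReal
  rw [gammaMeasure, integral_withDensity_eq_integral_toReal_smul hmeas
      (ae_of_all _ fun _ => ENNReal.ofReal_lt_top)]
  simp_rw [hpdf, smul_eq_mul]
  rw [← integral_Ici_eq_integral_Ioi, setIntegral_eq_integral_of_forall_compl_eq_zero]
  intro x hx
  simp [gammaPDFReal, show ¬ 0 ≤ x from hx]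

lemma gammaPDFReal_one_of_nonneg {a x : ℝ} (hx : 0 ≤ x) :
    gammaPDFReal a 1 x = (Real.Gamma a)⁻¹ * (Real.exp (-x) * x ^ (a - 1)) := by
  simp only [gammaPDFReal, if_pos hx, Real.one_rpow, one_mul]
  ring

lemma exp_neg_mul_rpow_mul_inv_one_add_mem_Icc {a x : ℝ} (hx : 0 < x) :
    Real.exp (-x) * x ^ (a - 1) * (1 + x)⁻¹ ∈
      Icc (Real.exp (-x) * x ^ (a - 1 - 1) - Real.exp (-x) * x ^ (a - 2 - 1))
        (Real.exp (-x) * x ^ (a - 1 - 1)) := by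
  have h1 : x ^ (a - 1) = x ^ (a - 1 - 1) * x := by
    rw [← Real.rpow_add_one hx.ne']; ring_nf
  have h2 : x ^ (a - 1 - 1) = x ^ (a - 2 - 1) * x := by
    rw [← Real.rpow_add_one hx.ne']; ring_nf
  have hpos : 0 < x ^ (a - 2 - 1) := Real.rpow_pos_of_pos hx _
  have hexp := Real.exp_pos (-x)
  rw [h1, h2]
  constructor
  · rw [← div_eq_mul_inv, le_div_iff₀ (by linarith)]
    nlinarith [mul_pos hexp hpos]
  · rw [← div_eq_mul_inv, div_le_iff₀ (by linarith)]
    nlinarith [mul_pos (mul_pos hexp hpos) hx]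

lemma setIntegral_exp_neg_mul_rpow_mul_inv_one_add_mem_Icc {a : ℝ} (ha : 2 < a) :
    ∫ x in Ioi 0, Real.exp (-x) * x ^ (a - 1) * (1 + x)⁻¹ ∈
      Icc (Real.Gamma (a - 1) - Real.Gamma (a - 2)) (Real.Gamma (a - 1)) := by
  have hint₁ := Real.GammaIntegral_convergent (s := a - 1) (by linarith)
  have hint₂ := Real.GammaIntegral_convergent (s := a - 2) (by linarith)
  have hbounds := fun x (hx : x ∈ Ioi (0 : ℝ)) =>
    exp_neg_mul_rpow_mul_inv_one_add_mem_Icc (a := a) (x := x) hx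
  have hint : IntegrableOn (fun x => Real.exp (-x) * x ^ (a - 1) * (1 + x)⁻¹) (Ioi 0) := by
    refine hint₁.mono' (by fun_prop) ((ae_restrict_iff' measurableSet_Ioi).mpr (ae_of_all _ ?_))
    intro x hx
    rw [Real.norm_of_nonneg (by have : (0 : ℝ) < x := hx; positivity)]
    exact (hbounds x hx).2
  rw [Real.Gamma_eq_integral (by linarith), Real.Gamma_eq_integral (by linarith),
    ← integral_sub hint₁ hint₂]
  exact ⟨setIntegral_mono_on (hint₁.sub hint₂) hint measurableSet_Ioi fun x hx => (hbounds x hx).1,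
    setIntegral_mono_on hint hint₁ measurableSet_Ioi fun x hx => (hbounds x hx).2⟩

lemma integral_inv_one_add_gammaMeasure_mem_Icc {a : ℝ} (ha : 2 < a) :
    ∫ x, (1 + x)⁻¹ ∂gammaMeasure a 1 ∈ Icc ((a - 1)⁻¹ - ((a - 1) * (a - 2))⁻¹) (a - 1)⁻¹ := by
  have hΓ₁ : Real.Gamma (a - 1) = (a - 2) * Real.Gamma (a - 2) := by
    rw [← Real.Gamma_add_one (by linarith)]; ring_nf
  have hΓ : Real.Gamma a = (a - 1) * Real.Gamma (a - 1) := by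
    rw [← Real.Gamma_add_one (by linarith)]; ring_nf
  have h₁ : 0 < a - 1 := by linarith
  have h₂ : 0 < a - 2 := by linarith
  have hΓ₂ : 0 < Real.Gamma (a - 2) := Real.Gamma_pos_of_pos h₂
  have heq : ∫ x, (1 + x)⁻¹ ∂gammaMeasure a 1 =
      (Real.Gamma a)⁻¹ * ∫ x in Ioi 0, Real.exp (-x) * x ^ (a - 1) * (1 + x)⁻¹ := by
    rw [integral_gammaMeasure_eq_setIntegral (by linarith) one_pos, ← integral_const_mul]
    refine setIntegral_congr_fun measurableSet_Ioi fun x hx => ?_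
    rw [gammaPDFReal_one_of_nonneg (le_of_lt hx)]
    ring
  obtain ⟨hlo, hhi⟩ := setIntegral_exp_neg_mul_rpow_mul_inv_one_add_mem_Icc ha
  have hinv : 0 < (Real.Gamma a)⁻¹ := by
    rw [hΓ, hΓ₁]; positivity
  rw [heq]
  constructor
  · convert mul_le_mul_of_nonneg_left hlo hinv.le using 1
    rw [hΓ, hΓ₁]
    field_simp
  · convert mul_le_mul_of_nonneg_left hhi hinv.le using 1
    rw [hΓ, hΓ₁]
    field_simp

lemma abs_mul_integral_inv_one_add_gammaMeasure_sub_one_le {a : ℝ} (ha : 3 ≤ a) :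
    |a * ∫ x, (1 + x)⁻¹ ∂gammaMeasure a 1 - 1| ≤ 3 / a := by
  obtain ⟨hlo, hhi⟩ := integral_inv_one_add_gammaMeasure_mem_Icc (a := a) (by linarith)
  have h₁ : 0 < a - 1 := by linarith
  have h₂ : 0 < a - 2 := by linarith
  have ha₀ : 0 ≤ a := by linarith
  have hupper : a * (a - 1)⁻¹ - 1 ≤ 3 / a := by
    rw [show a * (a - 1)⁻¹ - 1 = 1 / (a - 1) by field_simp; ring,
      div_le_div_iff₀ h₁ (by linarith)]
    linarith
  have hlower : -(3 / a) ≤ a * ((a - 1)⁻¹ - ((a - 1) * (a - 2))⁻¹) - 1 := by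
    rw [show a * ((a - 1)⁻¹ - ((a - 1) * (a - 2))⁻¹) - 1 = -(2 / ((a - 1) * (a - 2))) by
      field_simp; ring, neg_le_neg_iff, div_le_div_iff₀ (by positivity) (by linarith)]
    nlinarith
  rw [abs_le]
  constructor
  · linarith [mul_le_mul_of_nonneg_left hlo ha₀]
  · linarith [mul_le_mul_of_nonneg_left hhi ha₀]

theorem stmt8_general
    {Ω : Type*} [MeasurableSpace Ω] (μ : Measure Ω)
    (T : ℕ → Ω → ℝ) (hmeas : ∀ r, Measurable (T r))
    (hdist : ∀ r ≥ 1, μ.map (T r) = gammaMeasure r 1)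
    (p : ℕ → ℝ) (hp : ∀ r, p r = μ[fun ω => (1 + T r ω)⁻¹]) :
    Tendsto (fun r : ℕ => (r : ℝ) * p r) atTop (𝓝 1) := by
  have hp_gamma (r : ℕ) (hr : 1 ≤ r) : p r = ∫ x, (1 + x)⁻¹ ∂gammaMeasure r 1 := by
    rw [hp, ← hdist r hr, integral_map (hmeas r).aemeasurable (by fun_prop)]
  have hclose : ∀ᶠ r : ℕ in atTop, |(r : ℝ) * p r - 1| ≤ 3 / r := by
    filter_upwards [eventually_ge_atTop 3] with r hr
    rw [hp_gamma r (by omega)]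
    exact abs_mul_integral_inv_one_add_gammaMeasure_sub_one_le (by exact_mod_cast hr)
  rw [tendsto_iff_norm_sub_tendsto_zero]
  exact squeeze_zero' (Eventually.of_forall fun _ => norm_nonneg _) hclose
    (tendsto_const_div_atTop_nhds_zero_nat 3)

/-- If `T r` is Gamma(r,1)-distributed (sum of `r` rate-1 exponentials) and
`p r = E[1/(1+T r)]`, then `r * p r → 1` as `r → ∞`. -/
theorem stmt8
    {Ω : Type*} [MeasurableSpace Ω] (μ : Measure Ω) [IsProbabilityMeasure μ]
    (T : ℕ → Ω → ℝ) (hmeas : ∀ r, Measurable (T r))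
    (hdist : ∀ r ≥ 1, μ.map (T r) = gammaMeasure r 1)
    (p : ℕ → ℝ) (hp : ∀ r, p r = μ[fun ω => (1 + T r ω)⁻¹]) :
    Tendsto (fun r : ℕ => (r : ℝ) * p r) atTop (𝓝 1) :=
  stmt8_general μ T hmeas hdist p hp
end

section
/- Consider a weighted graph $G = (V,E)$ with all edge costs finite and distinct, such that each vertex has only finitely many incident edges of cost below any finite threshold, and such that $G$ contains no infinite descending path (no infinite sequence of adjacent edges with strictly decreasing costs). Then $G$ has a unique stable matching. -/
/-!
Orient the edges and write `e' ≺ e` when `e'` is an edge at an endpoint of `e` that is cheaper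
than `e`. By local finiteness every edge has finitely many `≺`-predecessors, so a
non-accessible edge has a cheapest non-accessible predecessor. Starting from an edge that is
cheapest among the non-accessible edges at its first endpoint, this predecessor must sit at the
far endpoint and has the same property there; iterating traces an infinite descending path.
Hence `≺` is well-founded, and we may call an edge greedy when no `≺`-smaller edge is greedy.
Greedy edges form a stable matching, and well-founded induction along `≺` shows that every
stable matching consists exactly of the greedy edges.
-/

open Classical

/-- `M : V → Option V` is a matching of the graph `G`: matched pairs are adjacent and
the partner relation is symmetric. -/
def IsGraphMatching {V : Type*} (G : SimpleGraph V) (M : V → Option V) : Prop :=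
  ∀ u v : V, M u = some v → G.Adj u v ∧ M v = some u

/-- The matching cost of a vertex: the cost of its matching edge, `⊤` if unmatched. -/
noncomputable def matchingCost {V : Type*} (τ : V → V → ℝ) (M : V → Option V) (v : V) :
    EReal :=
  (M v).elim ⊤ (fun u => (τ v u : EReal))

/-- A matching is stable if no non-matching edge is cheaper than both endpoint costs. -/
def IsStableMatching {V : Type*} (G : SimpleGraph V) (τ : V → V → ℝ)
    (M : V → Option V) : Prop :=
  IsGraphMatching G M ∧
    ∀ u v : V, G.Adj u v → M u ≠ some v →
      min (matchingCost τ M u) (matchingCost τ M v) < (τ u v : EReal)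

theorem exists_min_not_acc_of_finite_pred {α β : Type*} [LinearOrder β] {r : α → α → Prop}
    (f : α → β) (hfin : ∀ y, {x | r x y}.Finite) {y : α} (hy : ¬ Acc r y) :
    ∃ x, r x y ∧ ¬ Acc r x ∧ ∀ x', r x' y → ¬ Acc r x' → f x ≤ f x' := by
  have hne : {x | r x y ∧ ¬ Acc r x}.Nonempty := by
    by_contra h
    exact hy (Acc.intro y fun x hx => by_contra fun hx' => h ⟨x, hx, hx'⟩)
  obtain ⟨x, ⟨hxy, hx⟩, hmin⟩ :=
    Set.exists_min_image _ f ((hfin y).subset fun x hx => hx.1) hne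
  exact ⟨x, hxy, hx, fun x' h₁ h₂ => hmin x' ⟨h₁, h₂⟩⟩

section Partner

variable {V : Type*}

noncomputable def partnerOf (P : V → V → Prop) (v : V) : Option V :=
  if h : ∃ u, P v u then some h.choose else none

theorem partnerOf_eq_some_iff {P : V → V → Prop} (huniq : ∀ v u u', P v u → P v u' → u = u')
    {v u : V} : partnerOf P v = some u ↔ P v u := by
  unfold partnerOf
  split_ifs with h
  · exact ⟨fun hu => Option.some_injective _ hu ▸ h.choose_spec,
      fun hu => congrArg some (huniq _ _ _ h.choose_spec hu)⟩
  · exact iff_of_false (by simp) fun hu => h ⟨u, hu⟩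

theorem matchingCost_lt_coe_iff {τ : V → V → ℝ} {M : V → Option V} {v : V} {t : ℝ} :
    matchingCost τ M v < (t : EReal) ↔ ∃ u, M v = some u ∧ τ v u < t := by
  unfold matchingCost
  cases M v <;> simp

end Partner

section StableMatching

variable {V : Type*} {G : SimpleGraph V} {τ : V → V → ℝ}

variable (G τ) in
def CheaperIncident (e' e : V × V) : Prop :=
  G.Adj e'.1 e'.2 ∧ τ e'.1 e'.2 < τ e.1 e.2 ∧ (e'.1 = e.1 ∨ e'.1 = e.2)

variable (G τ) in
def DescendingStep (e' e : V × V) : Prop :=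
  G.Adj e.1 e.2 ∧ e'.1 = e.2 ∧ G.Adj e'.1 e'.2 ∧ τ e'.1 e'.2 < τ e.1 e.2

variable (G τ) in
def LeastInaccessibleAtFst (e : V × V) : Prop :=
  G.Adj e.1 e.2 ∧ ¬ Acc (CheaperIncident G τ) e ∧
    ∀ d, G.Adj e.1 d → τ e.1 d < τ e.1 e.2 → Acc (CheaperIncident G τ) (e.1, d)

theorem wellFounded_descendingStep
    (hnodesc : ¬ ∃ p : ℕ → V, (∀ n, G.Adj (p n) (p (n + 1))) ∧
      ∀ n, τ (p (n + 1)) (p (n + 2)) < τ (p n) (p (n + 1))) :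
    WellFounded (DescendingStep G τ) := by
  refine wellFounded_iff_isEmpty_descending_chain.2 ⟨fun ⟨f, hf⟩ => hnodesc ?_⟩
  have hsnd : ∀ n, (f n).2 = (f (n + 1)).1 := fun n => (hf n).2.1.symm
  refine ⟨fun n => (f n).1, fun n => ?_, fun n => ?_⟩
  · simpa only [hsnd] using (hf n).1
  · simpa only [hsnd] using (hf n).2.2.2

theorem finite_cheaperIncident
    (hlocfin : ∀ v : V, ∀ s : ℝ, {u : V | G.Adj v u ∧ τ v u < s}.Finite) (e : V × V) :
    {e' | CheaperIncident G τ e' e}.Finite := by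
  refine (((hlocfin e.1 (τ e.1 e.2)).image (Prod.mk e.1)).union
    ((hlocfin e.2 (τ e.1 e.2)).image (Prod.mk e.2))).subset ?_
  rintro ⟨x, c⟩ ⟨hadj, hlt, rfl | rfl⟩
  · exact Or.inl ⟨c, ⟨hadj, hlt⟩, rfl⟩
  · exact Or.inr ⟨c, ⟨hadj, hlt⟩, rfl⟩

theorem exists_leastInaccessibleAtFst
    (hlocfin : ∀ v : V, ∀ s : ℝ, {u : V | G.Adj v u ∧ τ v u < s}.Finite) {e : V × V}
    (he : ¬ Acc (CheaperIncident G τ) e) :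
    ∃ e', CheaperIncident G τ e' e ∧ LeastInaccessibleAtFst G τ e' := by
  obtain ⟨e', he', hna, hmin⟩ :=
    exists_min_not_acc_of_finite_pred (fun e => τ e.1 e.2) (finite_cheaperIncident hlocfin) he
  refine ⟨e', he', he'.1, hna, fun d hd hlt => by_contra fun hd' => ?_⟩
  exact (hmin (e'.1, d) ⟨hd, hlt.trans he'.2.1, he'.2.2⟩ hd').not_gt hlt

theorem LeastInaccessibleAtFst.exists_descendingStep
    (hlocfin : ∀ v : V, ∀ s : ℝ, {u : V | G.Adj v u ∧ τ v u < s}.Finite) {e : V × V}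
    (he : LeastInaccessibleAtFst G τ e) :
    ∃ e', DescendingStep G τ e' e ∧ LeastInaccessibleAtFst G τ e' := by
  obtain ⟨⟨x, c⟩, ⟨hadj, hlt, rfl | rfl⟩, he'⟩ := exists_leastInaccessibleAtFst hlocfin he.2.1
  · exact absurd (he.2.2 c hadj hlt) he'.2.1
  · exact ⟨_, ⟨he.1, rfl, hadj, hlt⟩, he'⟩

theorem wellFounded_cheaperIncident
    (hlocfin : ∀ v : V, ∀ s : ℝ, {u : V | G.Adj v u ∧ τ v u < s}.Finite)
    (hnodesc : ¬ ∃ p : ℕ → V, (∀ n, G.Adj (p n) (p (n + 1))) ∧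
      ∀ n, τ (p (n + 1)) (p (n + 2)) < τ (p n) (p (n + 1))) :
    WellFounded (CheaperIncident G τ) := by
  refine ⟨fun e₀ => by_contra fun h₀ => ?_⟩
  obtain ⟨e, -, he⟩ := exists_leastInaccessibleAtFst hlocfin h₀
  induction (wellFounded_descendingStep hnodesc).apply e with
  | intro e _ ih =>
    obtain ⟨e', hstep, he'⟩ := he.exists_descendingStep hlocfin
    exact ih e' hstep he'

variable (G τ) in
def IsGreedyEdge (hwf : WellFounded (CheaperIncident G τ)) : V × V → Prop :=
  hwf.fix fun e ih => G.Adj e.1 e.2 ∧ ∀ e' (h : CheaperIncident G τ e' e), ¬ ih e' h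

theorem isGreedyEdge_iff (hwf : WellFounded (CheaperIncident G τ)) (e : V × V) :
    IsGreedyEdge G τ hwf e ↔
      G.Adj e.1 e.2 ∧ ∀ e', CheaperIncident G τ e' e → ¬ IsGreedyEdge G τ hwf e' := by
  rw [IsGreedyEdge, WellFounded.fix_eq]

theorem IsGreedyEdge.adj {hwf : WellFounded (CheaperIncident G τ)} {e : V × V}
    (he : IsGreedyEdge G τ hwf e) : G.Adj e.1 e.2 :=
  ((isGreedyEdge_iff hwf e).1 he).1

theorem cheaperIncident_swap (hsymm : ∀ u v, τ u v = τ v u) {e' : V × V} {a b : V} :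
    CheaperIncident G τ e' (a, b) ↔ CheaperIncident G τ e' (b, a) := by
  simp only [CheaperIncident, hsymm b a, or_comm]

theorem isGreedyEdge_swap (hsymm : ∀ u v, τ u v = τ v u)
    (hwf : WellFounded (CheaperIncident G τ)) {a b : V} :
    IsGreedyEdge G τ hwf (a, b) ↔ IsGreedyEdge G τ hwf (b, a) := by
  rw [isGreedyEdge_iff, isGreedyEdge_iff]
  exact and_congr (G.adj_comm a b)
    (forall_congr' fun _ => imp_congr_left (cheaperIncident_swap hsymm))

theorem eq_of_isGreedyEdge (hinj : ∀ v u u', G.Adj v u → G.Adj v u' → τ v u = τ v u' → u = u')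
    (hwf : WellFounded (CheaperIncident G τ)) {v u u' : V}
    (hu : IsGreedyEdge G τ hwf (v, u)) (hu' : IsGreedyEdge G τ hwf (v, u')) : u = u' := by
  by_contra hne
  rcases lt_or_gt_of_ne (mt (hinj v u u' hu.adj hu'.adj) hne) with hlt | hlt
  · exact ((isGreedyEdge_iff hwf _).1 hu').2 _ ⟨hu.adj, hlt, Or.inl rfl⟩ hu
  · exact ((isGreedyEdge_iff hwf _).1 hu).2 _ ⟨hu'.adj, hlt, Or.inl rfl⟩ hu'

variable (G τ) in
noncomputable def greedyMatching (hwf : WellFounded (CheaperIncident G τ)) : V → Option V :=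
  partnerOf fun v u => IsGreedyEdge G τ hwf (v, u)

theorem greedyMatching_eq_some_iff
    (hinj : ∀ v u u', G.Adj v u → G.Adj v u' → τ v u = τ v u' → u = u')
    (hwf : WellFounded (CheaperIncident G τ)) {v u : V} :
    greedyMatching G τ hwf v = some u ↔ IsGreedyEdge G τ hwf (v, u) :=
  partnerOf_eq_some_iff (P := fun v u => IsGreedyEdge G τ hwf (v, u))
    fun _ _ _ => eq_of_isGreedyEdge hinj hwf

theorem isStableMatching_greedyMatching (hsymm : ∀ u v, τ u v = τ v u)
    (hinj : ∀ v u u', G.Adj v u → G.Adj v u' → τ v u = τ v u' → u = u')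
    (hwf : WellFounded (CheaperIncident G τ)) :
    IsStableMatching G τ (greedyMatching G τ hwf) := by
  have hM := fun v u => greedyMatching_eq_some_iff (v := v) (u := u) hinj hwf
  refine ⟨fun u v huv => ?_, fun u v hadj hne => ?_⟩
  · rw [hM] at huv ⊢
    exact ⟨huv.adj, (isGreedyEdge_swap hsymm hwf).1 huv⟩
  · rw [Ne, hM, isGreedyEdge_iff] at hne
    push Not at hne
    obtain ⟨⟨x, c⟩, ⟨-, hlt, rfl | rfl⟩, hg⟩ := hne hadj
    · exact min_lt_of_left_lt (matchingCost_lt_coe_iff.2 ⟨c, (hM _ _).2 hg, hlt⟩)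
    · exact min_lt_of_right_lt (matchingCost_lt_coe_iff.2 ⟨c, (hM _ _).2 hg, hlt⟩)

theorem IsStableMatching.eq_some_iff_isGreedyEdge_of_adj (hsymm : ∀ u v, τ u v = τ v u)
    (hwf : WellFounded (CheaperIncident G τ)) {M : V → Option V}
    (hM : IsStableMatching G τ M) {e : V × V} (he : G.Adj e.1 e.2) :
    M e.1 = some e.2 ↔ IsGreedyEdge G τ hwf e := by
  induction hwf.apply e with
  | intro e _ ih =>
    rw [isGreedyEdge_iff]
    constructor
    · refine fun hm => ⟨he, ?_⟩
      rintro ⟨x, c⟩ ⟨hxc, hlt, hx⟩ hg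
      have hMx : M x = some c := (ih _ ⟨hxc, hlt, hx⟩ hxc).2 hg
      rcases hx with rfl | rfl
      · cases hm.symm.trans hMx
        exact hlt.false
      · cases (hM.1 _ _ hm).2.symm.trans hMx
        exact (hsymm e.1 e.2 ▸ hlt).false
    · rintro ⟨-, hg⟩
      by_contra hne
      obtain ⟨x, hx, w, hMx, hlt⟩ :
          ∃ x, (x = e.1 ∨ x = e.2) ∧ ∃ w, M x = some w ∧ τ x w < τ e.1 e.2 := by
        rcases min_lt_iff.1 (hM.2 _ _ he hne) with h | h
        · exact ⟨_, Or.inl rfl, matchingCost_lt_coe_iff.1 h⟩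
        · exact ⟨_, Or.inr rfl, matchingCost_lt_coe_iff.1 h⟩
      have hxw : G.Adj x w := (hM.1 _ _ hMx).1
      exact hg (x, w) ⟨hxw, hlt, hx⟩ ((ih _ ⟨hxw, hlt, hx⟩ hxw).1 hMx)

theorem IsStableMatching.eq_some_iff_isGreedyEdge (hsymm : ∀ u v, τ u v = τ v u)
    (hwf : WellFounded (CheaperIncident G τ)) {M : V → Option V}
    (hM : IsStableMatching G τ M) {v u : V} :
    M v = some u ↔ IsGreedyEdge G τ hwf (v, u) := by
  by_cases hadj : G.Adj v u
  · exact hM.eq_some_iff_isGreedyEdge_of_adj hsymm hwf (e := (v, u)) hadj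
  · exact iff_of_false (fun h => hadj (hM.1 _ _ h).1) fun h => hadj h.adj

end StableMatching

/-- A weighted graph with symmetric, distinct edge costs, locally finite cost levels,
and no infinite descending path has a unique stable matching. -/
theorem stmt11 {V : Type*} (G : SimpleGraph V) (τ : V → V → ℝ)
    (hsymm : ∀ u v, τ u v = τ v u)
    (hdistinct : ∀ u v u' v', G.Adj u v → G.Adj u' v' → τ u v = τ u' v' →
      (u = u' ∧ v = v') ∨ (u = v' ∧ v = u'))
    (hlocfin : ∀ v : V, ∀ s : ℝ, {u : V | G.Adj v u ∧ τ v u < s}.Finite)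
    (hnodesc : ¬ ∃ p : ℕ → V, (∀ n, G.Adj (p n) (p (n + 1))) ∧
      ∀ n, τ (p (n + 1)) (p (n + 2)) < τ (p n) (p (n + 1))) :
    ∃! M : V → Option V, IsStableMatching G τ M := by
  have hinj : ∀ v u u', G.Adj v u → G.Adj v u' → τ v u = τ v u' → u = u' :=
    fun v u u' hu hu' h =>
      (hdistinct v u v u' hu hu' h).elim And.right fun h' => absurd h'.1 (G.ne_of_adj hu')
  have hwf := wellFounded_cheaperIncident hlocfin hnodesc
  have hgreedy := isStableMatching_greedyMatching hsymm hinj hwf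
  refine ⟨_, hgreedy, fun M hM => funext fun v => Option.ext fun u => ?_⟩
  exact (hM.eq_some_iff_isGreedyEdge hsymm hwf).trans
    (hgreedy.eq_some_iff_isGreedyEdge hsymm hwf).symm
end

section
/- Let $Y_1 \leq Y_2 \leq \cdots \leq Y_n$ be the ordered edge costs of the stable matching on $K_{n,n}$ with distinct edge costs, and for a vertex $u$ let $Y_1^u \leq \cdots \leq Y_{n-1}^u$ be the ordered edge costs of the stable matching of $K_{n,n}$ with $u$ removed (same edge costs). Then for all $k = 1, \ldots, n-1$: $Y_k \leq Y_k^u \leq Y_{k+1}$. -/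
open Finset

/-- A perfect matching `M` (a bijection between the two sides of `K_{n,n}`) is stable for
the costs `w` if every non-matching edge is more expensive than one of its endpoints'
matching edges. -/
def IsStableBipartite {n : ℕ} (w : Fin n → Fin n → ℝ) (M : Fin n ≃ Fin n) : Prop :=
  ∀ i j : Fin n, M i ≠ j → w i (M i) < w i j ∨ w (M.symm j) j < w i j

/-- A matching of `K_{n,n}` with left vertex `u` removed (an injection from the remaining
left vertices to the right vertices) is stable if every non-matching edge is more
expensive than the matching edge of one of its endpoints (an unmatched right endpoint
having infinite cost). -/
def IsStableBipartiteRemoved {n : ℕ} (w : Fin n → Fin n → ℝ) (u : Fin n)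
    (M' : {i : Fin n // i ≠ u} → Fin n) : Prop :=
  Function.Injective M' ∧
    ∀ (i : {i : Fin n // i ≠ u}) (j : Fin n), M' i ≠ j →
      w i.1 (M' i) < w i.1 j ∨ ∃ i', M' i' = j ∧ w i'.1 j < w i.1 j

/-!
Compare the stable matching `M` of `K_{n,n}` with the stable matching `M'` after removing the
left vertex `u`. A minimal-counterexample argument on the stability conditions shows that every
left vertex `i ≠ u` is matched at least as cheaply in `M'` as in `M`, and that every right vertex
matched in `M'` was matched at least as cheaply in `M`. Hence, for each threshold `t`, the
`M'`-edges of cost `≤ t` inject (through their right endpoints) into the `M`-edges of cost `≤ t`,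
and all `M`-edges of cost `≤ t` except possibly `u`'s come from `M'`-edges of cost `≤ t`. Since
`Y k ≤ t` iff more than `k` of the costs are `≤ t`, these two counts give the interlacing.
-/

theorem Finite.induction_of_lt_apply {α β : Type*} [Finite α] [LinearOrder β] (f : α → β)
    {P : α → Prop} (ih : ∀ a, (∀ b, f b < f a → P b) → P a) (a : α) : P a := by
  classical
  have := Fintype.ofFinite α
  by_contra ha
  obtain ⟨b, hb, hmin⟩ := exists_min_image {x | ¬P x} f ⟨a, by simpa using ha⟩
  refine (mem_filter.1 hb).2 (ih b fun c hc => ?_)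
  by_contra hPc
  exact (hmin c (by simpa using hPc)).not_gt hc

theorem Monotone.apply_le_iff_lt_card_filter {α : Type*} [LinearOrder α] {m : ℕ}
    {Y : Fin m → α} (hY : Monotone Y) (k : Fin m) (t : α) :
    Y k ≤ t ↔ (k : ℕ) < #{j | Y j ≤ t} := by
  constructor
  · intro h
    calc (k : ℕ) < #(Iic k) := by simp
      _ ≤ #{j | Y j ≤ t} :=
        card_le_card fun j hj => mem_filter.2 ⟨mem_univ j, (hY (mem_Iic.1 hj)).trans h⟩
  · intro h
    by_contra! hlt
    have hsub : ({j | Y j ≤ t} : Finset (Fin m)) ⊆ Iio k := fun j hj =>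
      mem_Iio.2 <| lt_of_not_ge fun hkj => (hlt.trans_le (hY hkj)).not_ge (mem_filter.1 hj).2
    have := card_le_card hsub
    simp only [Fin.card_Iio] at this
    omega

theorem card_filter_eq_of_map_univ_eq {α γ β : Type*} [Fintype α] [Fintype γ] {f : α → β}
    {g : γ → β} (hfg : univ.val.map f = univ.val.map g) (p : β → Prop) [DecidablePred p] :
    #{a | p (f a)} = #{c | p (g c)} := by
  simp only [card_def, filter_val]
  rw [← Multiset.countP_map, hfg, Multiset.countP_map]

section StableMatching

variable {n : ℕ} {w : Fin n → Fin n → ℝ} {M : Fin n ≃ Fin n} {u : Fin n}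
  {M' : {i : Fin n // i ≠ u} → Fin n}

theorem IsStableBipartiteRemoved.cost_le_of_isStableBipartite (hM : IsStableBipartite w M)
    (hM' : IsStableBipartiteRemoved w u M') (i : {i : Fin n // i ≠ u}) :
    w i (M' i) ≤ w i (M i) := by
  induction i using Finite.induction_of_lt_apply (fun i : {i // i ≠ u} => w i (M i)) with
  | ih i ih =>
  by_contra! hbad
  have hne : M' i ≠ M i := fun he => hbad.ne (by rw [he])
  rcases hM'.2 i (M i) hne with hlt | ⟨i₁, hi₁, hblock⟩
  · exact hlt.not_gt hbad
  have hi₁i : i₁.1 ≠ i := fun he => hblock.ne (by rw [he])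
  rcases hM i₁ (M i) (M.injective.ne hi₁i) with hprefer | hprefer
  · have := ih i₁ (hprefer.trans hblock)
    rw [hi₁] at this
    exact this.not_gt hprefer
  · rw [Equiv.symm_apply_apply] at hprefer
    exact hprefer.not_gt hblock

theorem IsStableBipartiteRemoved.partner_cost_le_of_isStableBipartite
    (hM : IsStableBipartite w M) (hM' : IsStableBipartiteRemoved w u M')
    (i : {i : Fin n // i ≠ u}) : w (M.symm (M' i)) (M' i) ≤ w i (M' i) := by
  induction i using Finite.induction_of_lt_apply (fun i : {i // i ≠ u} => w i (M' i)) with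
  | ih i ih =>
  by_contra! hbad
  have hne : M i ≠ M' i := by
    intro he
    rw [← he, Equiv.symm_apply_apply] at hbad
    exact hbad.false
  rcases hM i (M' i) hne with hprefer | hprefer
  · rcases hM'.2 i (M i) hne.symm with hlt | ⟨i₁, hi₁, hblock⟩
    · exact hlt.not_gt hprefer
    · have := ih i₁ (by rw [hi₁]; exact hblock.trans hprefer)
      rw [hi₁, Equiv.symm_apply_apply] at this
      exact this.not_gt hblock
  · exact hprefer.not_gt hbad

theorem IsStableBipartiteRemoved.card_cost_le_le (hM : IsStableBipartite w M)
    (hM' : IsStableBipartiteRemoved w u M') (t : ℝ) :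
    #{i | w i.1 (M' i) ≤ t} ≤ #{i | w i (M i) ≤ t} := by
  refine card_le_card_of_injOn (fun i => M.symm (M' i)) (fun i hi => ?_)
    fun a _ b _ hab => hM'.1 (M.symm.injective hab)
  simp only [coe_filter, mem_univ, true_and, Set.mem_ofPred_eq, Equiv.apply_symm_apply] at hi ⊢
  exact (hM'.partner_cost_le_of_isStableBipartite hM i).trans hi

theorem IsStableBipartiteRemoved.card_cost_le_le_add_one (hM : IsStableBipartite w M)
    (hM' : IsStableBipartiteRemoved w u M') (t : ℝ) :
    #{i | w i (M i) ≤ t} ≤ #{i | w i.1 (M' i) ≤ t} + 1 := by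
  have hsub : ({i | w i (M i) ≤ t} : Finset (Fin n)) ⊆
      insert u (({i | w i.1 (M' i) ≤ t} : Finset _).image Subtype.val) := by
    intro i hi
    by_cases hiu : i = u
    · rw [hiu]
      exact mem_insert_self _ _
    refine mem_insert_of_mem (mem_image.2 ⟨⟨i, hiu⟩, mem_filter.2 ⟨mem_univ _, ?_⟩, rfl⟩)
    exact (hM'.cost_le_of_isStableBipartite hM ⟨i, hiu⟩).trans (mem_filter.1 hi).2
  calc #{i | w i (M i) ≤ t}
      ≤ #(insert u (({i | w i.1 (M' i) ≤ t} : Finset _).image Subtype.val)) := card_le_card hsub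
    _ ≤ #{i | w i.1 (M' i) ≤ t} + 1 := (card_insert_le _ _).trans (by grw [card_image_le])

end StableMatching

/-- Interlacing of the ordered stable matching costs of `K_{n,n}` and of `K_{n,n}` with a
left vertex `u` removed: `Y k ≤ Y^u k ≤ Y (k+1)`. -/
theorem stmt12 {n : ℕ} (w : Fin n → Fin n → ℝ)
    (M : Fin n ≃ Fin n) (hM : IsStableBipartite w M)
    (u : Fin n) (M' : {i : Fin n // i ≠ u} → Fin n)
    (hM' : IsStableBipartiteRemoved w u M')
    (Y : Fin n → ℝ) (hYmono : Monotone Y)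
    (hYperm : (Finset.univ.val.map Y) = Finset.univ.val.map (fun i => w i (M i)))
    (Y' : Fin (n - 1) → ℝ) (hY'mono : Monotone Y')
    (hY'perm : (Finset.univ.val.map Y')
      = (Finset.univ.val (α := {i : Fin n // i ≠ u})).map (fun i => w i.1 (M' i))) :
    ∀ k : Fin (n - 1),
      Y ⟨k.1, by omega⟩ ≤ Y' k ∧ Y' k ≤ Y ⟨k.1 + 1, by omega⟩ := by
  intro k
  have hcount (t : ℝ) : #{i | Y i ≤ t} = #{i | w i (M i) ≤ t} :=
    card_filter_eq_of_map_univ_eq hYperm (· ≤ t)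
  have hcount' (t : ℝ) : #{i | Y' i ≤ t} = #{i | w i.1 (M' i) ≤ t} :=
    card_filter_eq_of_map_univ_eq hY'perm (· ≤ t)
  constructor
  · rw [hYmono.apply_le_iff_lt_card_filter, hcount]
    calc (k : ℕ) < #{i | Y' i ≤ Y' k} := (hY'mono.apply_le_iff_lt_card_filter k _).1 le_rfl
      _ = #{i | w i.1 (M' i) ≤ Y' k} := hcount' _
      _ ≤ #{i | w i (M i) ≤ Y' k} := hM'.card_cost_le_le hM _
  · rw [hY'mono.apply_le_iff_lt_card_filter, hcount']
    have hsucc : (k : ℕ) + 1 < #{i | w i (M i) ≤ Y ⟨k + 1, by omega⟩} :=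
      hcount _ ▸ (hYmono.apply_le_iff_lt_card_filter ⟨k + 1, by omega⟩ _).1 le_rfl
    have hcard := hM'.card_cost_le_le_add_one hM (Y ⟨k + 1, by omega⟩)
    omega
end
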